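/- For an index coding problem and a subset W' ⊆ {1,…,n}, the W'-restricted index coding problem I_{W'} is rate 1/2 feasible (i.e., there exist a finite field F and vectors V_i ∈ F^2 for i ∈ W' such that for every k ∈ W' and every receiver j, V_k ∉ span{V_i : i ∈ Interf_k(j) ∩ W'}) if and only if there are no W'-restricted internal conflicts. -/

import Mathlib

/-!
Common definitions: an index coding problem with `n` messages (indexed by `Fin n`),
`T ≥ 1` receivers, demand sets `D j` and side-information sets `S j`.
-/

/-- An index coding problem with `n` messages. -/
structure ICP (n : ℕ) where
  T : ℕ
  hT : 1 ≤ T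
  D : Fin T → Finset (Fin n)
  S : Fin T → Finset (Fin n)
  hDS : ∀ j, Disjoint (D j) (S j)

namespace ICP

variable {n : ℕ}

/-- The interfering set `Interf_k(j)`: all messages other than `k` not in the side
information of receiver `j`, provided `k ∈ D j`; empty otherwise. -/
def Interf (P : ICP n) (k : Fin n) (j : Fin P.T) : Finset (Fin n) :=
  if k ∈ P.D j then Finset.univ \ insert k (P.S j) else ∅

/-- All conflicts are resolved by the assignment `V` of `L`-length vectors over `F`
to the messages: for every message `k` and receiver `j`, `V k` is outside the span of
the vectors assigned to `Interf_k(j)`. -/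
def Resolved (P : ICP n) (F : Type) [Field F] {L : ℕ} (V : Fin n → Fin L → F) : Prop :=
  ∀ (k : Fin n) (j : Fin P.T),
    V k ∉ Submodule.span F (V '' (P.Interf k j : Set (Fin n)))

/-- Rate `1/L` feasibility: there exist a finite field `F` and an assignment of
`L`-length vectors over `F` resolving all conflicts. -/
def RateFeasible (P : ICP n) (L : ℕ) : Prop :=
  ∃ (F : Type) (_ : Field F) (_ : Fintype F) (V : Fin n → Fin L → F),
    P.Resolved F V

/-- Adjacency in the alignment graph: `i ≠ i'` both interfere at a receiver `j`
demanding some message `k ∉ {i, i'}`. -/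
def AlignAdj (P : ICP n) (i i' : Fin n) : Prop :=
  i ≠ i' ∧ ∃ (j : Fin P.T) (k : Fin n), k ∈ P.D j ∧ k ≠ i ∧ k ≠ i' ∧
    i ∈ P.Interf k j ∧ i' ∈ P.Interf k j

/-- The alignment graph. -/
def alignGraph (P : ICP n) : SimpleGraph (Fin n) where
  Adj := P.AlignAdj
  symm := ⟨by
    rintro a b ⟨hne, j, k, h1, h2, h3, h4, h5⟩
    exact ⟨hne.symm, j, k, h1, h3, h2, h5, h4⟩⟩
  loopless := ⟨by rintro a ⟨hne, -⟩; exact hne rfl⟩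

/-- Two messages lie in the same alignment set (connected component of the
alignment graph). -/
def SameAlignSet (P : ICP n) (i i' : Fin n) : Prop :=
  P.alignGraph.Reachable i i'

/-- Messages `i` and `k` are in conflict. -/
def InConflict (P : ICP n) (i k : Fin n) : Prop :=
  (∃ j, k ∈ P.D j ∧ i ∈ P.Interf k j) ∨ (∃ j, i ∈ P.D j ∧ k ∈ P.Interf i j)

/-- There is an internal conflict: a conflict between two messages lying in the
same alignment set. -/
def HasInternalConflict (P : ICP n) : Prop :=
  ∃ i k, P.InConflict i k ∧ P.SameAlignSet i k

/-- The conflict hypergraph, given as the set of unordered pairs `{{k}, Interf_k(j)}`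
over all receivers `j` and all demands `k ∈ D j`. -/
def conflictHypergraph (P : ICP n) : Set (Sym2 (Finset (Fin n))) :=
  {e | ∃ (j : Fin P.T) (k : Fin n), k ∈ P.D j ∧ e = s({k}, P.Interf k j)}

/-- The problem is groupcast: every message is demanded by at least one receiver. -/
def Groupcast (P : ICP n) : Prop := ∀ k : Fin n, ∃ j, k ∈ P.D j

/-- `i 0, i 1, i 2, i 3` form an acyclic subset of messages of size 4. -/
def AcyclicSubset4 (P : ICP n) (i : Fin 4 → Fin n) : Prop :=
  Function.Injective i ∧
    ∃ j : Fin 4 → Fin P.T, ∀ m : Fin 4, i m ∈ P.D (j m) ∧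
      ∀ m' : Fin 4, m' < m → i m' ∈ P.Interf (i m) (j m)

/-- The alignment set (connected component) of the vertex `v` has both a fork
(a vertex of degree at least 3) and a cycle all of whose vertices lie in it. -/
def HasForkAndCycle (P : ICP n) (v : Fin n) : Prop :=
  (∃ u, P.alignGraph.Reachable v u ∧ 3 ≤ (P.alignGraph.neighborSet u).ncard) ∧
  (∃ (u : Fin n) (c : P.alignGraph.Walk u u), c.IsCycle ∧
      ∀ x ∈ c.support, P.alignGraph.Reachable v x)

/-- A triangular interfering set: a 3-element set of messages simultaneously
interfering at some receiver, at least two of which are in conflict. -/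
def TriangularSet (P : ICP n) (W : Finset (Fin n)) : Prop :=
  W.card = 3 ∧ (∃ (j : Fin P.T) (k : Fin n), k ∈ P.D j ∧ W ⊆ P.Interf k j) ∧
    ∃ i i', i ∈ W ∧ i' ∈ W ∧ i ≠ i' ∧ P.InConflict i i'

/-- Two distinct triangular interfering sets are adjacent: they meet in exactly
two messages which are in conflict. -/
def TriAdj (P : ICP n) (W1 W2 : Finset (Fin n)) : Prop :=
  P.TriangularSet W1 ∧ P.TriangularSet W2 ∧ W1 ≠ W2 ∧
    ∃ i i', i ≠ i' ∧ W1 ∩ W2 = {i, i'} ∧ P.InConflict i i'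

/-- Two triangular interfering sets are connected: some finite sequence of
triangular interfering sets, with consecutive members adjacent, joins them. -/
def TriConnected (P : ICP n) (W1 W2 : Finset (Fin n)) : Prop :=
  P.TriangularSet W1 ∧ P.TriangularSet W2 ∧ Relation.ReflTransGen P.TriAdj W1 W2

/-- `W'` is a type-2 alignment set: the union of a maximal family of pairwise
connected triangular interfering sets. -/
def IsType2AlignSet (P : ICP n) (W' : Finset (Fin n)) : Prop :=
  ∃ 𝒯 : Set (Finset (Fin n)), 𝒯.Nonempty ∧
    (∀ W ∈ 𝒯, P.TriangularSet W) ∧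
    (∀ W1 ∈ 𝒯, ∀ W2 ∈ 𝒯, P.TriConnected W1 W2) ∧
    (∀ 𝒯' : Set (Finset (Fin n)), 𝒯 ⊆ 𝒯' → (∀ W ∈ 𝒯', P.TriangularSet W) →
      (∀ W1 ∈ 𝒯', ∀ W2 ∈ 𝒯', P.TriConnected W1 W2) → 𝒯' = 𝒯) ∧
    (W' : Set (Fin n)) = ⋃ W ∈ 𝒯, (W : Set (Fin n))

/-- The interfering set of message `k` at receiver `j` in the `W'`-restricted
index coding problem (its demand sets are `D j ∩ W'`, side information `S j ∩ W'`,
and message set `W'`). -/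
def rInterf (P : ICP n) (W' : Finset (Fin n)) (k : Fin n) (j : Fin P.T) :
    Finset (Fin n) :=
  if k ∈ P.D j ∩ W' then P.Interf k j ∩ W' else ∅

/-- Adjacency in the alignment graph of the `W'`-restricted problem. -/
def rAlignAdj (P : ICP n) (W' : Finset (Fin n)) (i i' : Fin n) : Prop :=
  i ≠ i' ∧ ∃ (j : Fin P.T) (k : Fin n), k ∈ P.D j ∩ W' ∧ k ≠ i ∧ k ≠ i' ∧
    i ∈ P.rInterf W' k j ∧ i' ∈ P.rInterf W' k j

/-- The alignment graph of the `W'`-restricted problem (messages outside `W'`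
are isolated vertices). -/
def rAlignGraph (P : ICP n) (W' : Finset (Fin n)) : SimpleGraph (Fin n) where
  Adj := P.rAlignAdj W'
  symm := ⟨by
    rintro a b ⟨hne, j, k, h1, h2, h3, h4, h5⟩
    exact ⟨hne.symm, j, k, h1, h3, h2, h5, h4⟩⟩
  loopless := ⟨by rintro a ⟨hne, -⟩; exact hne rfl⟩

/-- Conflict in the `W'`-restricted problem. -/
def rInConflict (P : ICP n) (W' : Finset (Fin n)) (i k : Fin n) : Prop :=
  (∃ j, k ∈ P.D j ∩ W' ∧ i ∈ P.rInterf W' k j) ∨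
  (∃ j, i ∈ P.D j ∩ W' ∧ k ∈ P.rInterf W' i j)

/-- There is a `W'`-restricted internal conflict: a conflict of the restricted
problem between two messages in the same `W'`-restricted alignment set. -/
def HasRestrictedInternalConflict (P : ICP n) (W' : Finset (Fin n)) : Prop :=
  ∃ i k, i ∈ W' ∧ k ∈ W' ∧ P.rInConflict W' i k ∧ (P.rAlignGraph W').Reachable i k

/-- The `W'`-restricted index coding problem is rate `1/2` feasible: there exist a
finite field `F` and vectors `V i ∈ F²` for `i ∈ W'` such that for every `k ∈ W'`
and every receiver `j`, `V k ∉ span {V i : i ∈ Interf_k(j) ∩ W'}`. -/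
def RestrictedRateHalfFeasible (P : ICP n) (W' : Finset (Fin n)) : Prop :=
  ∃ (F : Type) (_ : Field F) (_ : Fintype F) (V : Fin n → Fin 2 → F),
    ∀ k ∈ W', ∀ j : Fin P.T,
      V k ∉ Submodule.span F (V '' ((P.Interf k j ∩ W') : Set (Fin n)))

end ICP

/-!
In the plane, a vector lies in the span of a set of vectors only if the set spans the whole
plane or contains a nonzero multiple of it. So a solution must give the two ends of every edge
of the restricted alignment graph parallel vectors (else they span the plane, which contains the
demanded vector), hence parallel vectors along every alignment set, and a conflict inside an
alignment set cannot be resolved. Conversely, the messages interfering with one demand are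
pairwise adjacent; giving each alignment set its own line `F ∙ ![1, c]` (distinct `c` in a large
enough finite field) makes every interference span one line, which misses the demanded vector
exactly because there is no internal conflict.
-/

open Module Submodule

theorem Submodule.span_singleton_eq_of_span_pair_ne_top {K E : Type*} [DivisionRing K]
    [AddCommGroup E] [Module K E] [FiniteDimensional K E] (hE : finrank K E = 2) {u v : E}
    (hu : u ≠ 0) (hv : v ≠ 0) (huv : span K {u, v} ≠ ⊤) : K ∙ u = K ∙ v := by
  have hlt : finrank K (span K {u, v}) ≤ 1 := by have := Submodule.finrank_lt huv; omega
  have hu_eq : K ∙ u = span K {u, v} :=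
    eq_of_le_of_finrank_le (span_mono (by simp)) (by rwa [finrank_span_singleton hu])
  have hv_eq : K ∙ v = span K {u, v} :=
    eq_of_le_of_finrank_le (span_mono (by simp)) (by rwa [finrank_span_singleton hv])
  rw [hu_eq, hv_eq]

theorem Matrix.vecCons_one_mem_span_singleton_iff {K : Type*} [Semiring K] {x y : K} :
    ![1, x] ∈ K ∙ ![1, y] ↔ x = y := by
  refine ⟨fun h => ?_, fun h => h ▸ mem_span_singleton_self _⟩
  obtain ⟨a, ha⟩ := mem_span_singleton.1 h
  have ha1 : a = 1 := by simpa using congrFun ha 0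
  simpa [ha1] using (congrFun ha 1).symm

theorem exists_finite_field_embedding (α : Type*) [Finite α] :
    ∃ (F : Type) (_ : Field F) (_ : Fintype F), Nonempty (α ↪ F) := by
  have := Fintype.ofFinite α
  obtain ⟨p, hp_le, hp⟩ := Nat.exists_infinite_primes (Fintype.card α)
  have : Fact p.Prime := ⟨hp⟩
  exact ⟨ZMod p, inferInstance, inferInstance,
    Function.Embedding.nonempty_of_card_le (by rwa [ZMod.card])⟩

namespace ICP

variable {n : ℕ} {P : ICP n} {W' : Finset (Fin n)} {i k a b : Fin n} {j : Fin P.T}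

theorem mem_D_of_mem_Interf (h : i ∈ P.Interf k j) : k ∈ P.D j := by
  by_contra hk
  simp [Interf, hk] at h

theorem ne_of_mem_Interf (h : i ∈ P.Interf k j) : i ≠ k := by
  rintro rfl
  unfold Interf at h
  split_ifs at h <;> simp at h

theorem mem_rInterf_iff : i ∈ P.rInterf W' k j ↔ k ∈ W' ∧ i ∈ P.Interf k j ∩ W' := by
  unfold rInterf
  split_ifs with hk
  · simp [(Finset.mem_inter.1 hk).2]
  · simp only [Finset.notMem_empty, false_iff, not_and, Finset.mem_inter]
    exact fun hkW hi _ => hk (Finset.mem_inter.2 ⟨mem_D_of_mem_Interf hi, hkW⟩)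

theorem rAlignGraph_adj_iff : (P.rAlignGraph W').Adj a b ↔
    a ≠ b ∧ ∃ (j : Fin P.T) (k : Fin n), k ∈ W' ∧
      a ∈ P.Interf k j ∩ W' ∧ b ∈ P.Interf k j ∩ W' := by
  refine ⟨fun ⟨hab, j, k, _, _, _, ha, hb⟩ => ?_, fun ⟨hab, j, k, hk, ha, hb⟩ => ?_⟩
  · rw [mem_rInterf_iff] at ha hb
    exact ⟨hab, j, k, ha.1, ha.2, hb.2⟩
  · have hkD : k ∈ P.D j ∩ W' :=
      Finset.mem_inter.2 ⟨mem_D_of_mem_Interf (Finset.mem_inter.1 ha).1, hk⟩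
    exact ⟨hab, j, k, hkD, (ne_of_mem_Interf (Finset.mem_inter.1 ha).1).symm,
      (ne_of_mem_Interf (Finset.mem_inter.1 hb).1).symm,
      mem_rInterf_iff.2 ⟨hk, ha⟩, mem_rInterf_iff.2 ⟨hk, hb⟩⟩

theorem rAlignGraph_reachable_of_mem_Interf (hk : k ∈ W') (ha : a ∈ P.Interf k j ∩ W')
    (hb : b ∈ P.Interf k j ∩ W') : (P.rAlignGraph W').Reachable a b := by
  obtain rfl | hab := eq_or_ne a b
  · rfl
  · exact (rAlignGraph_adj_iff.2 ⟨hab, j, k, hk, ha, hb⟩).reachable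

def RestrictedResolves (P : ICP n) (W' : Finset (Fin n)) (K : Type*) {E : Type*} [DivisionRing K]
    [AddCommGroup E] [Module K E] (V : Fin n → E) : Prop :=
  ∀ k ∈ W', ∀ j : Fin P.T, V k ∉ span K (V '' ((P.Interf k j ∩ W') : Set (Fin n)))

namespace RestrictedResolves

variable {K E : Type*} [DivisionRing K] [AddCommGroup E] [Module K E] {V : Fin n → E}

theorem ne_zero (hV : P.RestrictedResolves W' K V) (ha : a ∈ W') (j : Fin P.T) : V a ≠ 0 :=
  fun h0 => hV a ha j (h0 ▸ zero_mem _)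

theorem span_singleton_eq_of_adj [FiniteDimensional K E] (hE : finrank K E = 2)
    (hV : P.RestrictedResolves W' K V) (hab : (P.rAlignGraph W').Adj a b) :
    K ∙ V a = K ∙ V b := by
  obtain ⟨-, j, k, hk, ha, hb⟩ := rAlignGraph_adj_iff.1 hab
  refine span_singleton_eq_of_span_pair_ne_top hE (hV.ne_zero (Finset.mem_inter.1 ha).2 j)
    (hV.ne_zero (Finset.mem_inter.1 hb).2 j) fun htop => hV k hk j (span_mono ?_ (htop ▸ mem_top))
  rintro _ (rfl | rfl)
  exacts [⟨a, by simpa using ha, rfl⟩, ⟨b, by simpa using hb, rfl⟩]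

theorem span_singleton_eq_of_reachable [FiniteDimensional K E] (hE : finrank K E = 2)
    (hV : P.RestrictedResolves W' K V) (hab : (P.rAlignGraph W').Reachable a b) :
    K ∙ V a = K ∙ V b := by
  replace hab := (SimpleGraph.reachable_iff_reflTransGen a b).1 hab
  induction hab with
  | refl => rfl
  | tail _ hbc ih => exact ih.trans (hV.span_singleton_eq_of_adj hE hbc)

theorem not_reachable_of_mem_rInterf [FiniteDimensional K E] (hE : finrank K E = 2)
    (hV : P.RestrictedResolves W' K V) (hi : i ∈ P.rInterf W' k j) :
    ¬ (P.rAlignGraph W').Reachable i k := by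
  rw [mem_rInterf_iff] at hi
  intro hik
  refine hV k hi.1 j (span_mono ?_ ((hV.span_singleton_eq_of_reachable hE hik).symm ▸
    mem_span_singleton_self (V k)))
  rintro _ rfl
  exact ⟨i, by simpa using hi.2, rfl⟩

theorem not_hasRestrictedInternalConflict [FiniteDimensional K E] (hE : finrank K E = 2)
    (hV : P.RestrictedResolves W' K V) : ¬ P.HasRestrictedInternalConflict W' := by
  rintro ⟨i, k, -, -, ⟨j, -, hi⟩ | ⟨j, -, hk⟩, hik⟩
  exacts [hV.not_reachable_of_mem_rInterf hE hi hik,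
    hV.not_reachable_of_mem_rInterf hE hk hik.symm]

end RestrictedResolves

theorem restrictedResolves_componentVectors {K : Type*} [DivisionRing K]
    (e : (P.rAlignGraph W').ConnectedComponent ↪ K)
    (h : ¬ P.HasRestrictedInternalConflict W') :
    P.RestrictedResolves W' K fun a => ![1, e ((P.rAlignGraph W').connectedComponentMk a)] := by
  set V : Fin n → Fin 2 → K := fun a => ![1, e ((P.rAlignGraph W').connectedComponentMk a)]
  intro k hk j hmem
  obtain hS | ⟨i, hi⟩ := (P.Interf k j ∩ W').eq_empty_or_nonempty
  · simp [V, ← Finset.coe_inter, hS] at hmem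
  have himg : V '' ((P.Interf k j ∩ W') : Set (Fin n)) ⊆ {V i} := by
    rintro _ ⟨a, ha, rfl⟩
    simp only [V, Set.mem_singleton_iff, SimpleGraph.ConnectedComponent.sound
      (rAlignGraph_reachable_of_mem_Interf hk (by simpa using ha) hi)]
  have hki := e.injective (Matrix.vecCons_one_mem_span_singleton_iff.1 (span_mono himg hmem))
  have hiI := Finset.mem_inter.1 hi
  exact h ⟨i, k, hiI.2, hk, Or.inl ⟨j, Finset.mem_inter.2 ⟨mem_D_of_mem_Interf hiI.1, hk⟩,
    mem_rInterf_iff.2 ⟨hk, hi⟩⟩, (SimpleGraph.ConnectedComponent.exact hki).symm⟩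

end ICP

/-- The `W'`-restricted index coding problem is rate `1/2`
feasible iff there are no `W'`-restricted internal conflicts. -/
theorem restricted_rateHalf_iff_no_restricted_internal_conflict {n : ℕ}
    (P : ICP n) (W' : Finset (Fin n)) :
    P.RestrictedRateHalfFeasible W' ↔ ¬ P.HasRestrictedInternalConflict W' := by
  refine ⟨fun ⟨F, _, _, _, hV⟩ => ?_, fun h => ?_⟩
  · exact ICP.RestrictedResolves.not_hasRestrictedInternalConflict (K := F)
      (finrank_fin_fun F) hV
  · obtain ⟨F, _, hF, ⟨e⟩⟩ :=
      exists_finite_field_embedding (P.rAlignGraph W').ConnectedComponent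
    exact ⟨F, _, hF, _, P.restrictedResolves_componentVectors e h⟩
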